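/- The integral I_1 = ∬_T (−ln(xy))/(xy) dx dy over the triangle T with vertices (1,0), (0,1), (1,1) equals 2ζ(3). -/

import Mathlib

open MeasureTheory

open Set Real ENNReal

lemma gamma_integ (k : ℕ) {r : ℝ} (hr : 1 ≤ r) :
    IntegrableOn (fun t => t ^ k * Real.exp (-(r * t))) (Set.Ioi (0:ℝ)) := by
  have h := Real.GammaIntegral_convergent (s := (k+1:ℝ)) (by positivity)
  refine h.mono' ?_ ?_
  · exact ((measurable_id.pow_const k).mul
      ((measurable_id.const_mul r).neg.exp)).aestronglyMeasurable
  · filter_upwards [ae_restrict_mem measurableSet_Ioi] with t (ht : 0 < t)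
    rw [Real.norm_eq_abs, abs_of_nonneg (by positivity)]
    have e1 : t ^ ((k:ℝ)+1-1) = t ^ k := by
      rw [add_sub_cancel_right, Real.rpow_natCast]
    rw [e1, mul_comm (Real.exp _)]
    have : Real.exp (-(r*t)) ≤ Real.exp (-t) := Real.exp_le_exp.2 (by nlinarith)
    exact mul_le_mul_of_nonneg_left this (by positivity)

lemma gamma_val (k : ℕ) {r : ℝ} (hr : 0 < r) :
    ∫ t in Set.Ioi (0:ℝ), t ^ k * Real.exp (-(r * t)) = k.factorial / r ^ (k+1) := by
  have h := Real.integral_rpow_mul_exp_neg_mul_Ioi (a := (k+1:ℝ)) (by positivity) hr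
  have e1 : ∀ t : ℝ, t ^ ((k:ℝ)+1-1) = t ^ k := fun t => by
    rw [add_sub_cancel_right, Real.rpow_natCast]
  simp only [e1] at h
  rw [h]
  have : ((k:ℝ)+1) = ((k+1 : ℕ) : ℝ) := by push_cast; ring
  rw [this, Real.rpow_natCast]
  have e2 : Real.Gamma ((k+1:ℕ):ℝ) = k.factorial := by
    push_cast
    exact Real.Gamma_nat_eq_factorial k
  rw [e2, div_pow, one_pow, div_mul_eq_mul_div, one_mul]
-- image lemmas
lemma img1 : (fun t => Real.exp (-t)) '' Set.Ioi 0 = Set.Ioo (0:ℝ) 1 := by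
  ext x
  constructor
  · rintro ⟨t, ht, rfl⟩
    exact ⟨Real.exp_pos _, Real.exp_lt_one_iff.2 (by simpa using ht)⟩
  · rintro ⟨hx0, hx1⟩
    refine ⟨-Real.log x, by simpa using Real.log_neg hx0 hx1, ?_⟩
    show Real.exp (-(-Real.log x)) = x
    rw [neg_neg, Real.exp_log hx0]

lemma img2 : (fun t => 1 - Real.exp (-t)) '' Set.Ioi 0 = Set.Ioo (0:ℝ) 1 := by
  have : (fun t => 1 - Real.exp (-t)) = (fun x => 1 - x) ∘ (fun t => Real.exp (-t)) := rfl
  rw [this, Set.image_comp, img1]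
  ext x
  simp only [Set.mem_image, Set.mem_Ioo]
  constructor
  · rintro ⟨y, ⟨h0, h1⟩, rfl⟩
    constructor <;> linarith
  · rintro ⟨h0, h1⟩
    exact ⟨1-x, ⟨by linarith, by linarith⟩, by ring⟩

-- substitution lemma
lemma lint_subst {f d : ℝ → ℝ} (hf' : ∀ t ∈ Set.Ioi (0:ℝ), HasDerivWithinAt f (d t) (Set.Ioi 0) t)
    (hinj : Set.InjOn f (Set.Ioi 0)) (g : ℝ → ℝ≥0∞) :
    ∫⁻ x in f '' Set.Ioi 0, g x = ∫⁻ t in Set.Ioi 0, ENNReal.ofReal |d t| * g (f t) := by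
  have := MeasureTheory.lintegral_image_eq_lintegral_abs_det_fderiv_mul (volume : Measure ℝ)
    measurableSet_Ioi (f' := fun t => ContinuousLinearMap.smulRight (1 : ℝ →L[ℝ] ℝ) (d t))
    (fun x hx => (hf' x hx).hasFDerivWithinAt) hinj g
  simpa only [ContinuousLinearMap.smulRight_one_eq_toSpanSingleton, ContinuousLinearMap.det_toSpanSingleton] using this

-- per-term lemma
lemma term_val (k : ℕ) {c : ℝ} (hc : 0 ≤ c) (n : ℕ) :
    ∫⁻ t in Set.Ioi (0:ℝ), ENNReal.ofReal (c * (t ^ k * Real.exp (-(((n:ℝ)+1) * t)))) =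
      ENNReal.ofReal (c * (k.factorial / ((n:ℝ)+1) ^ (k+1))) := by
  have hr : (1:ℝ) ≤ (n:ℝ)+1 := by linarith [Nat.cast_nonneg (α:=ℝ) n]
  have hint : IntegrableOn (fun t => c * (t ^ k * Real.exp (-(((n:ℝ)+1) * t)))) (Set.Ioi 0) :=
    (gamma_integ k hr).const_mul c
  rw [← ofReal_integral_eq_lintegral_ofReal hint ?_]
  · rw [MeasureTheory.integral_const_mul, gamma_val k (by positivity)]
  · filter_upwards [ae_restrict_mem measurableSet_Ioi] with t (ht : 0 < t)
    positivity


lemma inner_eval {x : ℝ} (hx : x ∈ Set.Ioo (0:ℝ) 1) :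
    ∫⁻ y in Set.Icc (1-x) 1, ENNReal.ofReal ((-Real.log (x*y))/(x*y)) =
      ENNReal.ofReal (Real.log x * Real.log (1-x) / x) +
      ENNReal.ofReal (Real.log (1-x)^2 / (2*x)) := by
  obtain ⟨hx0, hx1⟩ := hx
  have h1x : 0 < 1 - x := by linarith
  have hle : 1 - x ≤ 1 := by linarith
  have hxy : ∀ y ∈ Set.Icc (1-x) 1, 0 < x*y := fun y hy =>
    mul_pos hx0 (lt_of_lt_of_le h1x hy.1)
  have hcont : ContinuousOn (fun y => (-Real.log (x*y))/(x*y)) (Set.Icc (1-x) 1) := by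
    apply ContinuousOn.div
    · exact (Real.continuousOn_log.comp
        ((continuous_const.mul continuous_id).continuousOn)
        (fun y hy => (hxy y hy).ne')).neg
    · exact (continuous_const.mul continuous_id).continuousOn
    · exact fun y hy => (hxy y hy).ne'
  have hint : IntegrableOn (fun y => (-Real.log (x*y))/(x*y)) (Set.Icc (1-x) 1) :=
    hcont.integrableOn_compact isCompact_Icc
  have hnn : 0 ≤ᵐ[volume.restrict (Set.Icc (1-x) 1)] fun y => (-Real.log (x*y))/(x*y) := by
    filter_upwards [ae_restrict_mem measurableSet_Icc] with y hy
    have h1 : x * y ≤ 1 := by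
      have := hy.2
      nlinarith [hxy y hy]
    exact div_nonneg (by simpa using Real.log_nonpos (hxy y hy).le h1) (hxy y hy).le
  rw [← ofReal_integral_eq_lintegral_ofReal hint hnn]
  have hIcc : ∫ y in Set.Icc (1-x) 1, (-Real.log (x*y))/(x*y) =
      ∫ y in (1-x)..1, (-Real.log (x*y))/(x*y) := by
    rw [MeasureTheory.integral_Icc_eq_integral_Ioc, intervalIntegral.integral_of_le hle]
  have hderiv : ∀ y ∈ Set.uIcc (1-x) 1,
      HasDerivAt (fun y => -(Real.log (x*y)^2/(2*x))) ((-Real.log (x*y))/(x*y)) y := by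
    intro y hy
    rw [Set.uIcc_of_le hle] at hy
    have hxy' := hxy y hy
    have h1 : HasDerivAt (fun y : ℝ => x*y) x y := by
      simpa using (hasDerivAt_id y).const_mul x
    have h2 : HasDerivAt (fun y => Real.log (x*y)) ((x*y)⁻¹ * x) y :=
      (Real.hasDerivAt_log hxy'.ne').comp y h1
    have h3 := ((h2.pow 2).div_const (2*x)).neg
    have hy0 : y ≠ 0 := (lt_of_lt_of_le h1x hy.1).ne'
    convert h3 using 1
    · rfl
    · rfl
    · rfl
    rw [mul_inv]
    norm_num
    field_simp [hx0.ne', hy0]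
  have hii : IntervalIntegrable (fun y => (-Real.log (x*y))/(x*y)) volume (1-x) 1 := by
    apply ContinuousOn.intervalIntegrable
    rwa [Set.uIcc_of_le hle]
  rw [hIcc, intervalIntegral.integral_eq_sub_of_hasDerivAt hderiv hii]
  have hlogm : Real.log (x*(1-x)) = Real.log x + Real.log (1-x) :=
    Real.log_mul hx0.ne' h1x.ne'
  have heq : -(Real.log (x*1)^2/(2*x)) - -(Real.log (x*(1-x))^2/(2*x)) =
      Real.log x * Real.log (1-x) / x + Real.log (1-x)^2 / (2*x) := by
    rw [mul_one, hlogm]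
    field_simp
    ring
  rw [heq]
  have hnn1 : 0 ≤ Real.log x * Real.log (1-x) / x := by
    have l1 := Real.log_nonpos hx0.le hx1.le
    have l2 := Real.log_nonpos h1x.le (by linarith : 1-x ≤ 1)
    have : 0 ≤ Real.log x * Real.log (1-x) := by nlinarith
    positivity
  exact ENNReal.ofReal_add hnn1 (by positivity)

/-- The triangle with vertices (1,0), (0,1), (1,1). -/
def T : Set (ℝ × ℝ) := {p | 0 ≤ p.1 ∧ p.1 ≤ 1 ∧ 1 - p.1 ≤ p.2 ∧ p.2 ≤ 1}


lemma hTmeas : MeasurableSet T := by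
  have : T = {p : ℝ×ℝ | 0 ≤ p.1} ∩ ({p : ℝ×ℝ | p.1 ≤ 1} ∩
      ({p : ℝ×ℝ | 1 - p.1 ≤ p.2} ∩ {p : ℝ×ℝ | p.2 ≤ 1})) := by
    ext p
    simp only [T, Set.mem_setOf_eq, Set.mem_inter_iff]
  rw [this]
  exact (measurableSet_le measurable_const measurable_fst).inter
    ((measurableSet_le measurable_fst measurable_const).inter
    (((measurableSet_le (measurable_const.sub measurable_fst) measurable_snd)).inter
    (measurableSet_le measurable_snd measurable_const)))

lemma step1 : (∫ p in T, (-Real.log (p.1*p.2))/(p.1*p.2)) =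
    (∫⁻ x in Set.Ioo (0:ℝ) 1, (ENNReal.ofReal (Real.log x * Real.log (1-x)/x) +
      ENNReal.ofReal (Real.log (1-x)^2/(2*x)))).toReal := by
  set f : ℝ × ℝ → ℝ := fun p => (-Real.log (p.1*p.2))/(p.1*p.2) with hf
  have hm : Measurable f :=
    ((Real.measurable_log.comp (measurable_fst.mul measurable_snd)).neg).div
      (measurable_fst.mul measurable_snd)
  have hnn : ∀ p ∈ T, 0 ≤ f p := by
    rintro ⟨x, y⟩ ⟨h1, h2, h3, h4⟩
    have hy0 : 0 ≤ y := by dsimp at h3 h2 ⊢; linarith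
    have hxy0 : 0 ≤ x * y := mul_nonneg h1 hy0
    have hxy1 : x * y ≤ 1 := by nlinarith
    exact div_nonneg (by simpa using Real.log_nonpos hxy0 hxy1) hxy0
  rw [MeasureTheory.integral_eq_lintegral_of_nonneg_ae
    ((ae_restrict_iff' hTmeas).2 (ae_of_all _ hnn)) hm.aestronglyMeasurable.restrict]
  congr 1
  set g : ℝ × ℝ → ℝ≥0∞ := fun p => ENNReal.ofReal (f p) with hg
  have hgm : Measurable g := hm.ennreal_ofReal
  set h : ℝ → ℝ≥0∞ := fun x => ENNReal.ofReal (Real.log x * Real.log (1-x)/x) +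
      ENNReal.ofReal (Real.log (1-x)^2/(2*x)) with hh
  rw [← lintegral_indicator hTmeas, Measure.volume_eq_prod,
    lintegral_prod _ (hgm.indicator hTmeas).aemeasurable]
  have key : ∀ x : ℝ, x ≠ 1 →
      (∫⁻ y, T.indicator g (x, y)) = (Set.Ioo (0:ℝ) 1).indicator h x := by
    intro x hx1
    by_cases hx : x ∈ Set.Ioo (0:ℝ) 1
    · have hslice : ∀ y, T.indicator g (x, y) =
          (Set.Icc (1-x) 1).indicator (fun y => g (x, y)) y := by
        intro y
        by_cases hy : y ∈ Set.Icc (1-x) 1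
        · rw [Set.indicator_of_mem hy,
            Set.indicator_of_mem (show (x,y) ∈ T from ⟨hx.1.le, hx.2.le, hy.1, hy.2⟩)]
        · rw [Set.indicator_of_notMem hy, Set.indicator_of_notMem (fun hT' => hy ⟨hT'.2.2.1, hT'.2.2.2⟩)]
      simp only [hslice]
      rw [lintegral_indicator measurableSet_Icc, Set.indicator_of_mem hx]
      exact inner_eval hx
    · rw [Set.indicator_of_notMem hx]
      by_cases hx0 : x = 0
      · subst hx0
        have hslice : ∀ y, T.indicator g (0, y) =
            (Set.Icc (1:ℝ) 1).indicator (fun y => g (0, y)) y := by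
          intro y
          by_cases hy : y ∈ Set.Icc (1:ℝ) 1
          · rw [Set.indicator_of_mem hy, Set.indicator_of_mem
              (show ((0:ℝ),y) ∈ T from ⟨le_refl _, zero_le_one, by simpa using hy.1, hy.2⟩)]
          · rw [Set.indicator_of_notMem hy, Set.indicator_of_notMem
              (fun hT' => hy ⟨by simpa using hT'.2.2.1, hT'.2.2.2⟩)]
        simp only [hslice]
        rw [lintegral_indicator measurableSet_Icc, Set.Icc_self,
          setLIntegral_measure_zero _ _ Real.volume_singleton]
      · have hempty : ∀ y, T.indicator g (x, y) = 0 := by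
          intro y
          apply Set.indicator_of_notMem
          rintro ⟨h1, h2, h3, h4⟩
          simp only [Set.mem_Ioo, not_and_or, not_lt] at hx
          dsimp at h1 h2
          rcases hx with hx | hx
          · exact hx0 (le_antisymm hx h1)
          · exact hx1 (le_antisymm h2 hx)
        simp only [hempty, lintegral_zero]
  have hae : (fun x => ∫⁻ y, T.indicator g (x, y)) =ᵐ[volume]
      (Set.Ioo (0:ℝ) 1).indicator h := by
    have hne : ∀ᵐ x : ℝ, x ≠ 1 := by
      rw [ae_iff]
      have : {a : ℝ | ¬a ≠ 1} = {1} := by ext z; simp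
      rw [this, Real.volume_singleton]
    filter_upwards [hne] with x hx using key x hx
  rw [lintegral_congr_ae hae, lintegral_indicator measurableSet_Ioo]
lemma L1_eval : ∫⁻ x in Set.Ioo (0:ℝ) 1, ENNReal.ofReal (Real.log x * Real.log (1-x)/x) =
    ∑' n : ℕ, ENNReal.ofReal (1/((n:ℝ)+1)^3) := by
  have hderiv : ∀ t ∈ Set.Ioi (0:ℝ),
      HasDerivWithinAt (fun t => Real.exp (-t)) (-Real.exp (-t)) (Set.Ioi 0) t := by
    intro t _
    have := ((Real.hasDerivAt_exp (-t)).comp t (hasDerivAt_neg t))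
    simpa [mul_comm, Function.comp_def] using this.hasDerivWithinAt
  have hinj : Set.InjOn (fun t => Real.exp (-t)) (Set.Ioi 0) :=
    (Real.exp_injective.comp neg_injective).injOn
  rw [← img1, lint_subst hderiv hinj]
  have hpt : ∀ t ∈ Set.Ioi (0:ℝ),
      ENNReal.ofReal |(-Real.exp (-t))| *
        ENNReal.ofReal (Real.log (Real.exp (-t)) * Real.log (1 - Real.exp (-t)) / Real.exp (-t)) =
      ∑' n : ℕ, ENNReal.ofReal ((1/((n:ℝ)+1)) * (t ^ 1 * Real.exp (-(((n:ℝ)+1) * t)))) := by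
    intro t ht
    have hu0 : 0 < Real.exp (-t) := Real.exp_pos _
    have hu1 : Real.exp (-t) < 1 := Real.exp_lt_one_iff.2 (by simpa using ht)
    rw [abs_neg, abs_of_pos hu0, ← ENNReal.ofReal_mul hu0.le]
    have heq : Real.exp (-t) * (Real.log (Real.exp (-t)) * Real.log (1 - Real.exp (-t)) / Real.exp (-t)) =
        t * -Real.log (1 - Real.exp (-t)) := by
      rw [Real.log_exp]
      field_simp
    rw [heq]
    have hs := (Real.hasSum_pow_div_log_of_abs_lt_one
      (x := Real.exp (-t)) (by rw [abs_of_pos hu0]; exact hu1)).mul_left t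
    rw [← hs.tsum_eq, ENNReal.ofReal_tsum_of_nonneg ?_ hs.summable]
    · congr 1
      funext n
      congr 1
      rw [pow_one, ← Real.exp_nat_mul]
      push_cast
      field_simp
    · intro n
      have ht' : (0:ℝ) < t := ht
      positivity
  rw [setLIntegral_congr_fun measurableSet_Ioi hpt]
  rw [lintegral_tsum ?_]
  · congr 1
    funext n
    have hc : (0:ℝ) ≤ 1/((n:ℝ)+1) := by positivity
    rw [term_val 1 hc n]
    congr 1
    have h1 : (Nat.factorial 1 : ℝ) = 1 := by norm_num [Nat.factorial]
    rw [h1]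
    have hn : ((n:ℝ)+1) ≠ 0 := by positivity
    field_simp
  · intro n
    apply Measurable.aemeasurable
    apply Measurable.ennreal_ofReal
    exact (measurable_const.mul ((measurable_id.pow_const 1).mul
      ((measurable_id.const_mul _).neg.exp)))

lemma L2_eval : ∫⁻ x in Set.Ioo (0:ℝ) 1, ENNReal.ofReal (Real.log (1-x)^2/(2*x)) =
    ∑' n : ℕ, ENNReal.ofReal (1/((n:ℝ)+1)^3) := by
  have hderiv : ∀ t ∈ Set.Ioi (0:ℝ),
      HasDerivWithinAt (fun t => 1 - Real.exp (-t)) (Real.exp (-t)) (Set.Ioi 0) t := by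
    intro t _
    have h1 := ((Real.hasDerivAt_exp (-t)).comp t (hasDerivAt_neg t))
    have h2 := (hasDerivAt_const t (1:ℝ)).sub h1
    simpa [mul_comm, Function.comp_def, Pi.sub_def] using h2.hasDerivWithinAt
  have hinj : Set.InjOn (fun t => 1 - Real.exp (-t)) (Set.Ioi 0) := by
    intro a _ b _ h
    dsimp at h
    have : Real.exp (-a) = Real.exp (-b) := by linarith
    have := Real.exp_injective this
    linarith [neg_injective this]
  rw [← img2, lint_subst hderiv hinj]
  have hpt : ∀ t ∈ Set.Ioi (0:ℝ),
      ENNReal.ofReal |Real.exp (-t)| *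
        ENNReal.ofReal (Real.log (1 - (1 - Real.exp (-t)))^2 / (2*(1 - Real.exp (-t)))) =
      ∑' n : ℕ, ENNReal.ofReal ((1/2) * (t ^ 2 * Real.exp (-(((n:ℝ)+1) * t)))) := by
    intro t ht
    have ht' : (0:ℝ) < t := ht
    have hu0 : 0 < Real.exp (-t) := Real.exp_pos _
    have hu1 : Real.exp (-t) < 1 := Real.exp_lt_one_iff.2 (by simpa using ht)
    have h1u : 0 < 1 - Real.exp (-t) := by linarith
    rw [abs_of_pos hu0, ← ENNReal.ofReal_mul hu0.le]
    have heq : Real.exp (-t) * (Real.log (1 - (1 - Real.exp (-t)))^2 / (2*(1 - Real.exp (-t)))) =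
        (t^2/2 * Real.exp (-t)) * (1 - Real.exp (-t))⁻¹ := by
      have : 1 - (1 - Real.exp (-t)) = Real.exp (-t) := by ring
      rw [this, Real.log_exp]
      field_simp
    rw [heq]
    have hs := (hasSum_geometric_of_lt_one hu0.le hu1).mul_left (t^2/2 * Real.exp (-t))
    rw [← hs.tsum_eq, ENNReal.ofReal_tsum_of_nonneg ?_ hs.summable]
    · congr 1
      funext n
      congr 1
      have : Real.exp (-t) * Real.exp (-t)^n = Real.exp (-(((n:ℝ)+1) * t)) := by
        rw [← Real.exp_nat_mul, ← Real.exp_add]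
        congr 1
        ring
      calc t^2/2 * Real.exp (-t) * Real.exp (-t)^n
          = t^2/2 * (Real.exp (-t) * Real.exp (-t)^n) := by ring
        _ = 1/2 * (t^2 * Real.exp (-(((n:ℝ)+1) * t))) := by rw [this]; ring
    · intro n
      positivity
  rw [setLIntegral_congr_fun measurableSet_Ioi hpt]
  rw [lintegral_tsum ?_]
  · congr 1
    funext n
    have hc : (0:ℝ) ≤ 1/2 := by norm_num
    rw [term_val 2 hc n]
    congr 1
    have h2 : (Nat.factorial 2 : ℝ) = 2 := by norm_num [Nat.factorial]
    rw [h2]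
    have hn : ((n:ℝ)+1) ≠ 0 := by positivity
    field_simp
  · intro n
    apply Measurable.aemeasurable
    apply Measurable.ennreal_ofReal
    exact (measurable_const.mul ((measurable_id.pow_const 2).mul
      ((measurable_id.const_mul _).neg.exp)))


theorem integral_triangle_one :
    ((∫ p in T, (-Real.log (p.1 * p.2)) / (p.1 * p.2) : ℝ) : ℂ) = 2 * riemannZeta 3 := by
  have hsum : Summable (fun n : ℕ => 1/((n:ℝ)+1)^3) := by
    have h := (Real.summable_one_div_nat_pow (p := 3)).mpr (by norm_num)
    have h2 := (summable_nat_add_iff 1).mpr h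
    exact h2.congr (fun n => by push_cast; ring)
  set S : ℝ := ∑' n : ℕ, 1/((n:ℝ)+1)^3 with hS
  have hS0 : 0 ≤ S := tsum_nonneg (fun n => by positivity)
  have hlhs : (∫ p in T, (-Real.log (p.1 * p.2)) / (p.1 * p.2) : ℝ) = S + S := by
    rw [step1]
    rw [lintegral_add_left ?_, L1_eval, L2_eval]
    · rw [← ENNReal.ofReal_tsum_of_nonneg (fun n => by positivity) hsum, ← hS,
        ← ENNReal.ofReal_add hS0 hS0, ENNReal.toReal_ofReal (by positivity)]
    · exact ((Real.measurable_log.mul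
        (Real.measurable_log.comp (measurable_const.sub measurable_id))).div
        measurable_id).ennreal_ofReal
  rw [hlhs]
  have hz : riemannZeta 3 = ∑' n : ℕ, 1 / ((n:ℂ) + 1) ^ (3:ℕ) := by
    rw [zeta_eq_tsum_one_div_nat_add_one_cpow (by norm_num)]
    congr 1
    funext n
    rw [show (3:ℂ) = ((3:ℕ):ℂ) by norm_num, Complex.cpow_natCast]
  have hcast : (S:ℂ) = ∑' n : ℕ, 1 / ((n:ℂ) + 1) ^ (3:ℕ) := by
    rw [hS, Complex.ofReal_tsum]
    congr 1
    funext n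
    push_cast
    ring
  rw [hz, ← hcast]
  push_cast
  ring
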